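/- Let X be a topological space and (X, T, D) a rank-r MGDS satisfying (DC). Then the MGDS is essentially free if and only if the following holds: for all m, n, p, q ∈ ℕ^r, every nonempty open set O ⊆ X, and every map f : X → X such that for every x ∈ O one has x ∈ D n ∩ D q, f x ∈ D m ∩ D p, T m (f x) = T n x, and T p (f x) = T q x, one has m − n = p − q in ℤ^r. (This is the content of the statement that the canonical surjection from the semidirect product groupoid G(X,T) onto the groupoid of germs Germ(X,T) is an isomorphism exactly when (X,T) is essentially free.) -/

import Mathlib

/-!
If `T m ∘ f = T n` and `T p ∘ f = T q` near a point, set `k = m ⊔ p`; (DC) puts `f x` in `D k`,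
so composing with `T (k - m)` and `T (k - p)` gives `T (k - m + n) = T k ∘ f = T (k - p + q)`
on the open set. Essential freeness forces `k - m + n = k - p + q`, i.e. `m - n = p - q`.
Conversely, a germ equality `T m = T n` is the case `f = id`, `p = q = 0`.
-/

/-- A multiply generated dynamical system (MGDS) of rank `r` on a set `X`:
a family of subsets `D n ⊆ X` and maps `T n : X → X` indexed by `n ∈ ℕ^r`
such that `D 0 = X`, `T 0 = id`, `D (m+n) = {x ∈ D n | T n x ∈ D m}` and
`T (m+n) x = T m (T n x)` on `D (m+n)`. -/
structure MGDS (r : ℕ) (X : Type*) where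
  D : (Fin r → ℕ) → Set X
  T : (Fin r → ℕ) → X → X
  D_zero : D 0 = Set.univ
  T_zero : ∀ x, T 0 x = x
  D_add : ∀ m n, D (m + n) = {x ∈ D n | T n x ∈ D m}
  T_add : ∀ m n, ∀ x ∈ D (m + n), T (m + n) x = T m (T n x)

/-- The domain condition (DC): `D m ∩ D n ⊆ D (m ⊔ n)` where `⊔` is the
coordinatewise maximum. -/
def MGDS.DC {r : ℕ} {X : Type*} (S : MGDS r X) : Prop :=
  ∀ m n : Fin r → ℕ, S.D m ∩ S.D n ⊆ S.D (m ⊔ n)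

/-- Essential freeness: for every pair of distinct `m, n ∈ ℕ^r` there is no
nonempty open set `O ⊆ D m ∩ D n` on which `T m` and `T n` agree. -/
def MGDS.EssentiallyFree {r : ℕ} {X : Type*} [TopologicalSpace X] (S : MGDS r X) : Prop :=
  ∀ m n : Fin r → ℕ, m ≠ n →
    ¬ ∃ O : Set X, IsOpen O ∧ O.Nonempty ∧ O ⊆ S.D m ∩ S.D n ∧ ∀ x ∈ O, S.T m x = S.T n x

namespace MGDS

variable {r : ℕ} {X : Type*} (S : MGDS r X) {m n k : Fin r → ℕ} {x y : X}

theorem mem_D_add_iff : x ∈ S.D (m + n) ↔ x ∈ S.D n ∧ S.T n x ∈ S.D m := by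
  rw [S.D_add]
  rfl

theorem T_mem_D_sub (hmk : m ≤ k) (hy : y ∈ S.D k) : S.T m y ∈ S.D (k - m) := by
  rw [← tsub_add_cancel_of_le hmk, mem_D_add_iff] at hy
  exact hy.2

theorem T_eq_T_sub_T (hmk : m ≤ k) (hy : y ∈ S.D k) : S.T k y = S.T (k - m) (S.T m y) := by
  have h := S.T_add (k - m) m y (by rwa [tsub_add_cancel_of_le hmk])
  rwa [tsub_add_cancel_of_le hmk] at h

theorem mem_D_sub_add_of_T_eq (hmk : m ≤ k) (hy : y ∈ S.D k) (hx : x ∈ S.D n)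
    (h : S.T m y = S.T n x) : x ∈ S.D (k - m + n) :=
  S.mem_D_add_iff.2 ⟨hx, h ▸ S.T_mem_D_sub hmk hy⟩

theorem T_sub_add_eq_of_T_eq (hmk : m ≤ k) (hy : y ∈ S.D k) (hx : x ∈ S.D n)
    (h : S.T m y = S.T n x) : S.T (k - m + n) x = S.T k y := by
  rw [S.T_add _ _ x (S.mem_D_sub_add_of_T_eq hmk hy hx h), ← h, S.T_eq_T_sub_T hmk hy]

variable {S} in
theorem EssentiallyFree.eq_of_eqOn [TopologicalSpace X] (hEF : S.EssentiallyFree) {O : Set X}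
    (hO : IsOpen O) (hne : O.Nonempty) (hsub : O ⊆ S.D m ∩ S.D n)
    (heq : Set.EqOn (S.T m) (S.T n) O) : m = n := by
  by_contra hmn
  exact hEF m n hmn ⟨O, hO, hne, hsub, heq⟩

end MGDS

/-- an MGDS with (DC) on a topological space is essentially free if
and only if whenever a map `f` satisfies, on a nonempty open set `O`,
`T m (f x) = T n x` and `T p (f x) = T q x` (with the stated domain conditions),
one has `m - n = p - q` in `ℤ^r`.  (This is the content of the statement that the
canonical surjection `G(X,T) → Germ(X,T)` is an isomorphism exactly when `(X,T)`
is essentially free.) -/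
theorem mgds_essentially_free_iff_germ_degree
    {r : ℕ} {X : Type*} [TopologicalSpace X] (S : MGDS r X) (hDC : S.DC) :
    S.EssentiallyFree ↔
      (∀ (m n p q : Fin r → ℕ) (O : Set X), IsOpen O → O.Nonempty →
        ∀ f : X → X,
          (∀ x ∈ O, x ∈ S.D n ∩ S.D q ∧ f x ∈ S.D m ∩ S.D p ∧
            S.T m (f x) = S.T n x ∧ S.T p (f x) = S.T q x) →
          ∀ i, (m i : ℤ) - (n i : ℤ) = (p i : ℤ) - (q i : ℤ)) := by
  constructor
  · intro hEF m n p q O hO hne f hf i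
    have hm : m ≤ m ⊔ p := le_sup_left
    have hp : p ≤ m ⊔ p := le_sup_right
    have hfk : ∀ x ∈ O, f x ∈ S.D (m ⊔ p) := fun x hx => hDC m p (hf x hx).2.1
    have hdeg : m ⊔ p - m + n = m ⊔ p - p + q := by
      refine hEF.eq_of_eqOn hO hne (fun x hx => ?_) (fun x hx => ?_) <;>
        obtain ⟨⟨hxn, hxq⟩, -, hmn, hpq⟩ := hf x hx
      · exact ⟨S.mem_D_sub_add_of_T_eq hm (hfk x hx) hxn hmn,
          S.mem_D_sub_add_of_T_eq hp (hfk x hx) hxq hpq⟩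
      · rw [S.T_sub_add_eq_of_T_eq hm (hfk x hx) hxn hmn,
          S.T_sub_add_eq_of_T_eq hp (hfk x hx) hxq hpq]
    have hi := congrFun hdeg i
    simp only [Pi.add_apply, Pi.sub_apply, Pi.sup_apply] at hi
    omega
  · rintro h m n hmn ⟨O, hO, hne, hsub, heq⟩
    have hdeg := h m n 0 0 O hO hne id fun x hx =>
      ⟨⟨(hsub hx).2, S.D_zero ▸ trivial⟩, ⟨(hsub hx).1, S.D_zero ▸ trivial⟩, heq x hx, rfl⟩
    exact hmn (funext fun i => by have := hdeg i; simp only [Pi.zero_apply] at this; omega)
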